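/- Let x, y₀, r₀, r₁, r_x, p_Q ∈ ℂ satisfy x ∉ {0,1}, y₀ ∉ {0,1,x}, r₀ − r_x = p_Q·x·(y₀ − 1), r₁ − r_x = p_Q·y₀·(x − 1), and p_Q²·y₀(y₀ − 1)(y₀ − x) = 1. Define β₁ := −(y₀/x)·r₀², β₂ := ((y₀ − 1)/(x − 1))·r₁², β₃ := ((x − y₀)/(x(x − 1)))·r_x². Then r₀·(1 + β₁) + r₁·(1 + β₂) + r_x·(1 + β₃) = 0; consequently, if r₀, r₁, r_x are all nonzero, the (2,1)-entries A₂₁^{(i)} = −(βᵢ + βᵢ²)/(4·A₁₂^{(i)}) of the residue matrices, with A₁₂^{(1)} = −(y₀/x)·r₀, A₁₂^{(2)} = ((y₀−1)/(x−1))·r₁, A₁₂^{(3)} = ((x−y₀)/(x(x−1)))·r_x, satisfy A₂₁^{(1)} + A₂₁^{(2)} + A₂₁^{(3)} = 0. -/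

import Mathlib

/-!
Write `βᵢ = cᵢ rᵢ²` with `c₀ = -y₀/x`, `c₁ = (y₀-1)/(x-1)`, `c_x = (x-y₀)/(x(x-1))`. Since
`A₁₂^{(i)} = cᵢ rᵢ`, each entry `A₂₁^{(i)}` equals `-rᵢ (1 + βᵢ) / 4`, so the second claim is the
first one divided by `-4`. For the first, put `r₀ = r_x + a`, `r₁ = r_x + b`: the cubic
`Σ rᵢ (1 + cᵢ rᵢ²)`, expanded in powers of `r_x`, has as coefficients the moments
`Σ cᵢ dᵢᵏ` (with `d = (a, b, 0)`), and these are `0, 0, -1, -(a + b)` for `k = 0, 1, 2, 3`,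
the last two by the relation `p_Q² y₀ (y₀ - 1) (y₀ - x) = 1`.
-/

theorem neg_add_sq_div_four_mul_eq {K : Type*} [Field K] {c r : K} (hc : c ≠ 0) (hr : r ≠ 0) :
    -(c * r ^ 2 + (c * r ^ 2) ^ 2) / (4 * (c * r)) = -(r * (1 + c * r ^ 2)) / 4 := by
  have hfactor : c * r ^ 2 + (c * r ^ 2) ^ 2 = c * r * (r * (1 + c * r ^ 2)) := by ring
  rw [hfactor, ← mul_neg, mul_comm 4, mul_div_mul_left _ _ (mul_ne_zero hc hr)]

theorem sum_mul_one_add_mul_sq_eq_zero_of_moments {R : Type*} [CommRing R]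
    {c₀ c₁ c₂ a b r₀ r₁ r₂ : R} (hr₀ : r₀ - r₂ = a) (hr₁ : r₁ - r₂ = b)
    (m₀ : c₀ + c₁ + c₂ = 0) (m₁ : c₀ * a + c₁ * b = 0)
    (m₂ : c₀ * a ^ 2 + c₁ * b ^ 2 = -1) (m₃ : c₀ * a ^ 3 + c₁ * b ^ 3 = -(a + b)) :
    r₀ * (1 + c₀ * r₀ ^ 2) + r₁ * (1 + c₁ * r₁ ^ 2) + r₂ * (1 + c₂ * r₂ ^ 2) = 0 := by
  obtain rfl : r₀ = r₂ + a := by linear_combination hr₀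
  obtain rfl : r₁ = r₂ + b := by linear_combination hr₁
  linear_combination r₂ ^ 3 * m₀ + 3 * r₂ ^ 2 * m₁ + 3 * r₂ * m₂ + m₃

section EllipticMoments

variable {K : Type*} [Field K] {x y p : K}

theorem elliptic_coeff_sum (hx0 : x ≠ 0) (hx1 : x - 1 ≠ 0) :
    -(y / x) + (y - 1) / (x - 1) + (x - y) / (x * (x - 1)) = 0 := by
  field_simp
  ring

theorem elliptic_first_moment (hx0 : x ≠ 0) (hx1 : x - 1 ≠ 0) :
    -(y / x) * (p * x * (y - 1)) + (y - 1) / (x - 1) * (p * y * (x - 1)) = 0 := by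
  field_simp
  ring

theorem elliptic_second_moment (hp : p ^ 2 * (y * (y - 1) * (y - x)) = 1) :
    -(y / x) * (p * x * (y - 1)) ^ 2 + (y - 1) / (x - 1) * (p * y * (x - 1)) ^ 2 = -1 := by
  field_simp
  linear_combination -hp

theorem elliptic_third_moment (hp : p ^ 2 * (y * (y - 1) * (y - x)) = 1) :
    -(y / x) * (p * x * (y - 1)) ^ 3 + (y - 1) / (x - 1) * (p * y * (x - 1)) ^ 3
      = -(p * x * (y - 1) + p * y * (x - 1)) := by
  field_simp
  linear_combination p * (x + y - 2 * x * y) * hp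

end EllipticMoments

theorem sum_A21_entries_elliptic (x y₀ r₀ r₁ rx pQ : ℂ)
    (hx0 : x ≠ 0) (hx1 : x ≠ 1)
    (hy0 : y₀ ≠ 0) (hy1 : y₀ ≠ 1) (hyx : y₀ ≠ x)
    (h1 : r₀ - rx = pQ * x * (y₀ - 1))
    (h2 : r₁ - rx = pQ * y₀ * (x - 1))
    (hpQ : pQ ^ 2 * (y₀ * (y₀ - 1) * (y₀ - x)) = 1) :
    (r₀ * (1 + -(y₀ / x) * r₀ ^ 2) + r₁ * (1 + (y₀ - 1) / (x - 1) * r₁ ^ 2)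
        + rx * (1 + (x - y₀) / (x * (x - 1)) * rx ^ 2) = 0) ∧
      (r₀ ≠ 0 → r₁ ≠ 0 → rx ≠ 0 →
        -((-(y₀ / x) * r₀ ^ 2) + (-(y₀ / x) * r₀ ^ 2) ^ 2) / (4 * (-(y₀ / x) * r₀))
          + -(((y₀ - 1) / (x - 1) * r₁ ^ 2) + ((y₀ - 1) / (x - 1) * r₁ ^ 2) ^ 2) /
              (4 * ((y₀ - 1) / (x - 1) * r₁))
          + -(((x - y₀) / (x * (x - 1)) * rx ^ 2)
                + ((x - y₀) / (x * (x - 1)) * rx ^ 2) ^ 2) /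
              (4 * ((x - y₀) / (x * (x - 1)) * rx)) = 0) := by
  have hx1' : x - 1 ≠ 0 := sub_ne_zero.mpr hx1
  have cubic := sum_mul_one_add_mul_sq_eq_zero_of_moments h1 h2
    (elliptic_coeff_sum hx0 hx1') (elliptic_first_moment hx0 hx1')
    (elliptic_second_moment hpQ) (elliptic_third_moment hpQ)
  refine ⟨cubic, fun hr₀ hr₁ hrx => ?_⟩
  have hc₀ : -(y₀ / x) ≠ 0 := neg_ne_zero.mpr (div_ne_zero hy0 hx0)
  have hc₁ : (y₀ - 1) / (x - 1) ≠ 0 := div_ne_zero (sub_ne_zero.mpr hy1) hx1'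
  have hcx : (x - y₀) / (x * (x - 1)) ≠ 0 :=
    div_ne_zero (sub_ne_zero.mpr hyx.symm) (mul_ne_zero hx0 hx1')
  rw [neg_add_sq_div_four_mul_eq hc₀ hr₀, neg_add_sq_div_four_mul_eq hc₁ hr₁,
    neg_add_sq_div_four_mul_eq hcx hrx]
  linear_combination (-1 / 4 : ℂ) * cubic
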